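/- arXiv:2012.03230 — 2 statements merged into one kernel-verified Lean document; each statement's English description precedes it below -/
import Mathlib

section
/- Let F be a field, let k be a natural number, and let G be a finite simple graph on a linearly ordered vertex type V such that every vertex has at most k neighbors strictly smaller than it. Assign to each edge e of G (with endpoints u_e < v_e) elements a_e, b_e ∈ F with a_e ≠ 0 and b_e ≠ 0. Then the decorated graph polynomial D_G = ∏_{e ∈ E(G)} (a_e·X_{u_e} + b_e·X_{v_e}) has a monomial with nonzero coefficient whose total degree equals the number of edges of G and in which every variable has degree at most k. -/
open MvPolynomial Finset

/-!
Order the monomials lexicographically with larger vertices more significant. The leading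
monomial of the factor `a_e X_u + b_e X_v` (`u < v`, `b_e ≠ 0`) is then `X_v`, with coefficient
`b_e`. In any product, the coefficient of the product of the leading monomials is the product
of the leading coefficients, so `D_G` contains `∏_e X_{v_e}` with coefficient `∏_e b_e ≠ 0`. Its exponent at `w` counts the edges whose larger endpoint is `w`, i.e. the
neighbours of `w` below `w`.
-/

universe u

namespace MonomialOrder

variable {σ R : Type*} [CommSemiring R] (m : MonomialOrder σ)

theorem degree_C_mul_X_lt_degree_C_mul_X {a b : R} {u v : σ} (hb : b ≠ 0)
    (huv : Finsupp.single u 1 ≺[m] Finsupp.single v 1) :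
    m.degree (C a * X u) ≺[m] m.degree (C b * X v) := by
  classical
  rw [C_mul_X_eq_monomial, C_mul_X_eq_monomial, degree_monomial b, if_neg hb]
  exact lt_of_le_of_lt (m.degree_monomial_le a) huv

theorem degree_C_mul_X_add_C_mul_X {a b : R} {u v : σ} (hb : b ≠ 0)
    (huv : Finsupp.single u 1 ≺[m] Finsupp.single v 1) :
    m.degree (C a * X u + C b * X v) = Finsupp.single v 1 := by
  classical
  rw [m.degree_add_eq_right_of_lt (m.degree_C_mul_X_lt_degree_C_mul_X hb huv),
    C_mul_X_eq_monomial, degree_monomial, if_neg hb]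

theorem leadingCoeff_C_mul_X_add_C_mul_X {a b : R} {u v : σ} (hb : b ≠ 0)
    (huv : Finsupp.single u 1 ≺[m] Finsupp.single v 1) :
    m.leadingCoeff (C a * X u + C b * X v) = b := by
  rw [add_comm, m.leadingCoeff_add_of_lt (m.degree_C_mul_X_lt_degree_C_mul_X hb huv),
    C_mul_X_eq_monomial, leadingCoeff_monomial]

theorem coeff_sum_single_prod_C_mul_X_add_C_mul_X {ι : Type*} (s : Finset ι)
    (a b : ι → R) (u v : ι → σ) (hb : ∀ i ∈ s, b i ≠ 0)
    (huv : ∀ i ∈ s, Finsupp.single (u i) 1 ≺[m] Finsupp.single (v i) 1) :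
    coeff (∑ i ∈ s, Finsupp.single (v i) 1)
      (∏ i ∈ s, (C (a i) * X (u i) + C (b i) * X (v i))) = ∏ i ∈ s, b i := by
  calc _ = coeff (∑ i ∈ s, m.degree (C (a i) * X (u i) + C (b i) * X (v i)))
          (∏ i ∈ s, (C (a i) * X (u i) + C (b i) * X (v i))) := by
        rw [sum_congr rfl fun i hi => m.degree_C_mul_X_add_C_mul_X (hb i hi) (huv i hi)]
    _ = ∏ i ∈ s, m.leadingCoeff (C (a i) * X (u i) + C (b i) * X (v i)) :=
        m.coeff_prod_sum_degree _ _
    _ = ∏ i ∈ s, b i :=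
        prod_congr rfl fun i hi => m.leadingCoeff_C_mul_X_add_C_mul_X (hb i hi) (huv i hi)

-- `lex` makes smaller variables more significant, hence the order dual.
theorem exists_single_strictMono (σ : Type u) [LinearOrder σ] [WellFoundedLT σ] :
    ∃ m : MonomialOrder.{u, u} σ, StrictMono fun s : σ => m.toSyn (Finsupp.single s 1) :=
  ⟨lex (σ := σᵒᵈ), fun _ _ h => Finsupp.Lex.single_strictAnti (α := σᵒᵈ) h⟩

end MonomialOrder

namespace SimpleGraph

variable {V : Type*} [LinearOrder V] (G : SimpleGraph V)

theorem inf_lt_sup_of_mem_edgeSet {e : Sym2 V} (he : e ∈ G.edgeSet) : e.inf < e.sup := by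
  induction e with
  | _ u v => exact min_lt_max.mpr (G.ne_of_adj he)

theorem card_edgeFinset_filter_sup_eq_le [Fintype V] [DecidableRel G.Adj] (w : V) :
    #{e ∈ G.edgeFinset | e.sup = w} ≤ #{u ∈ G.neighborFinset w | u < w} := by
  refine (card_le_card fun e he => ?_).trans (card_image_le (f := fun u => s(u, w)))
  obtain ⟨heG, rfl⟩ := mem_filter.mp he
  have hinf_sup : s(e.inf, e.sup) = e := Sym2.sortEquiv.symm_apply_apply e
  have hadj : G.Adj e.inf e.sup := by rwa [← mem_edgeSet, hinf_sup, ← mem_edgeFinset]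
  exact mem_image.mpr ⟨e.inf, mem_filter.mpr ⟨(G.mem_neighborFinset _ _).mpr hadj.symm,
    G.inf_lt_sup_of_mem_edgeSet (mem_edgeFinset.mp heG)⟩, hinf_sup⟩

end SimpleGraph

theorem Finsupp.finsetSum_single_one_apply {ι σ : Type*} [DecidableEq σ] (s : Finset ι)
    (f : ι → σ) (w : σ) :
    (∑ i ∈ s, Finsupp.single (f i) 1 : σ →₀ ℕ) w = #{i ∈ s | f i = w} := by
  simp [Finsupp.finsetSum_apply, Finsupp.single_apply]

theorem Finsupp.degree_finsetSum_single_one {ι σ : Type*} (s : Finset ι) (f : ι → σ) :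
    (∑ i ∈ s, Finsupp.single (f i) 1 : σ →₀ ℕ).degree = #s := by
  simp [map_sum]

theorem decorated_poly_nonvanishing_monomial_general {F : Type*} [Field F]
    {V : Type*} [Fintype V] [LinearOrder V] (k : ℕ)
    (G : SimpleGraph V) [DecidableRel G.Adj]
    (hcol : ∀ w : V, ((G.neighborFinset w).filter fun u => u < w).card ≤ k)
    (a b : Sym2 V → F)
    (hb : ∀ e ∈ G.edgeFinset, b e ≠ 0) :
    ∃ D : V →₀ ℕ,
      coeff D (∏ e ∈ G.edgeFinset, (C (a e) * X e.inf + C (b e) * X e.sup)) ≠ 0 ∧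
      (D.sum fun _ n => n) = G.edgeFinset.card ∧
      ∀ w, D w ≤ k := by
  obtain ⟨m, hm⟩ := MonomialOrder.exists_single_strictMono V
  refine ⟨∑ e ∈ G.edgeFinset, Finsupp.single e.sup 1, ?_,
    Finsupp.degree_finsetSum_single_one _ _, fun w => ?_⟩
  · rw [m.coeff_sum_single_prod_C_mul_X_add_C_mul_X _ a b _ _ hb fun e he =>
      hm (G.inf_lt_sup_of_mem_edgeSet (G.mem_edgeFinset.mp he))]
    exact prod_ne_zero_iff.mpr hb
  · rw [Finsupp.finsetSum_single_one_apply]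
    exact (G.card_edgeFinset_filter_sup_eq_le w).trans (hcol w)

/-- If every vertex of `G` has at most `k` smaller neighbors and all decoration coefficients
are nonzero, then the decorated graph polynomial `D_G` has a non-vanishing monomial of total
degree `|E(G)|` in which every variable has degree at most `k`
(the inequality `Â_F(D_G) ≤ col(G) - 1` of the paper). -/
theorem decorated_poly_nonvanishing_monomial {F : Type*} [Field F]
    {V : Type*} [Fintype V] [LinearOrder V] (k : ℕ)
    (G : SimpleGraph V) [DecidableRel G.Adj]
    (hcol : ∀ w : V, ((G.neighborFinset w).filter fun u => u < w).card ≤ k)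
    (a b : Sym2 V → F)
    (ha : ∀ e ∈ G.edgeFinset, a e ≠ 0) (hb : ∀ e ∈ G.edgeFinset, b e ≠ 0) :
    ∃ D : V →₀ ℕ,
      coeff D (∏ e ∈ G.edgeFinset, (C (a e) * X e.inf + C (b e) * X e.sup)) ≠ 0 ∧
      (D.sum fun _ n => n) = G.edgeFinset.card ∧
      ∀ w, D w ≤ k :=
  decorated_poly_nonvanishing_monomial_general k G hcol a b hb
end

section
/- Let F be a field, let s ≥ 2 be a natural number, and let G be a finite simple graph with n vertices and m edges on a linearly ordered vertex type V, with m ≤ n·(s - 1). Assign to each edge e of G (with endpoints u_e < v_e) elements a_e, b_e, c_e ∈ F, and assign to each vertex w a finite set A_w ⊆ F with |A_w| = s. Suppose there exists at least one function f : V → F with f(w) ∈ A_w for every vertex w and a_e·f(u_e) + b_e·f(v_e) + c_e ≠ 0 for every edge e. Then the number of such functions is at least s^((n·(s-1) - m)/(s-1)), with real exponentiation. -/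
/-!
Dividing by the polynomials `∏_{t ∈ A i} (X i - t)` (Combinatorial Nullstellensatz style) replaces
a polynomial by one that agrees with it on the grid `∏ A i`, has degree `< s` in every variable and
no larger total degree. For such a nonzero polynomial `P` of total degree `d` one inducts on the
number of variables: if `k` is the degree of `P` in the first variable, its leading coefficient has
total degree at most `d - k` and is nonzero at `≥ s ^ (n - 1 - (d - k) / (s - 1))` points of the
smaller grid, and over each of them at most `k` of the `s` values of the first coordinate are roots.
Bernoulli's inequality `s ^ (1 - k / (s - 1)) ≤ s - k` closes the induction. The colorings are the
non-zeros on the grid of the product of the linear forms `a_e X_{u_e} + b_e X_{v_e} + c_e`, whose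
total degree is at most `m`.
-/

open Finset Fintype MvPolynomial

theorem Finset.card_filter_piFinset_succ {α : Type*} {n : ℕ} (S : Fin (n + 1) → Finset α)
    (p : (Fin (n + 1) → α) → Prop) [DecidablePred p] :
    #{x ∈ piFinset S | p x} = ∑ y ∈ piFinset (Fin.tail S), #{t ∈ S 0 | p (Fin.cons t y)} := by
  have := filter_piFinset_eq_map_consEquiv S (fun _ ↦ True)
  rw [filter_true, filter_true] at this
  rw [this, filter_map, card_map, card_filter, sum_product_right]
  exact sum_congr rfl fun y _ ↦ (card_filter _ _).symm

theorem Finset.card_filter_piFinset_equiv {α σ τ : Type*} [DecidableEq σ] [DecidableEq τ]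
    [Fintype σ] [Fintype τ] (e : σ ≃ τ) (S : σ → Finset α)
    (p : (σ → α) → Prop) [DecidablePred p] :
    #{y ∈ piFinset (S ∘ e.symm) | p (y ∘ e)} = #{x ∈ piFinset S | p x} := by
  refine card_nbij' (· ∘ e) (· ∘ e.symm) ?_ ?_ ?_ ?_ <;> intro x hx
  · simp only [coe_filter, Set.mem_ofPred_eq, mem_piFinset, Function.comp_apply] at hx ⊢
    exact ⟨fun i ↦ by simpa using hx.1 (e i), hx.2⟩
  · simp only [coe_filter, Set.mem_ofPred_eq, mem_piFinset, Function.comp_apply] at hx ⊢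
    exact ⟨fun i ↦ hx.1 _, by simpa [Function.comp_assoc] using hx.2⟩
  · ext; simp
  · ext; simp

theorem Polynomial.card_sub_natDegree_le_card_filter_eval_ne_zero {R : Type*} [CommRing R]
    [IsDomain R] [DecidableEq R] (S : Finset R) {p : Polynomial R} (hp : p ≠ 0) :
    #S - p.natDegree ≤ #{t ∈ S | p.eval t ≠ 0} := by
  have hroots : #{t ∈ S | p.eval t = 0} ≤ p.natDegree := calc
    #{t ∈ S | p.eval t = 0} ≤ #p.roots.toFinset := card_le_card fun t ht ↦ by
      simp_all [Polynomial.mem_roots hp]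
    _ ≤ p.natDegree := p.roots.toFinset_card_le.trans p.card_roots'
  have := card_filter_add_card_filter_not (s := S) (fun t ↦ p.eval t = 0)
  simp only [ne_eq]
  omega

namespace Real

theorem rpow_one_sub_div_le {s k : ℝ} (hs : 1 < s) (hk : 0 ≤ k) (hks : k ≤ s - 1) :
    s ^ (1 - k / (s - 1)) ≤ s - k := by
  have hs1 : 0 < s - 1 := sub_pos.mpr hs
  have := rpow_one_add_le_one_add_mul_self (s := s - 1) (p := 1 - k / (s - 1)) (by linarith)
    (sub_nonneg.mpr ((div_le_one hs1).mpr hks)) (sub_le_self _ (div_nonneg hk hs1.le))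
  convert this using 1
  · ring_nf
  · field_simp; ring

theorem rpow_succ_sub_div_le_mul {s : ℝ} (hs : 1 < s) {n d k e : ℕ}
    (hks : (k : ℝ) ≤ s - 1) (hkd : e + k ≤ d) :
    s ^ (((n + 1 : ℕ) : ℝ) - d / (s - 1)) ≤ (s - k) * s ^ ((n : ℝ) - e / (s - 1)) := by
  have hs1 : 0 < s - 1 := sub_pos.mpr hs
  have hkd' : (e : ℝ) ≤ d - k := by
    rw [le_sub_iff_add_le]; exact_mod_cast hkd
  calc s ^ (((n + 1 : ℕ) : ℝ) - d / (s - 1))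
      = s ^ (1 - k / (s - 1)) * s ^ ((n : ℝ) - (d - k) / (s - 1)) := by
        rw [← rpow_add (by linarith)]; congr 1; push_cast; field_simp; ring
    _ ≤ (s - k) * s ^ ((n : ℝ) - e / (s - 1)) := by
        gcongr
        · linarith
        · exact rpow_one_sub_div_le hs (Nat.cast_nonneg k) hks
        · exact hs.le

end Real

namespace MvPolynomial

open MonomialOrder in
theorem exists_degreeOf_lt_eval_eq {R σ : Type*} [CommRing R] [Nontrivial R] [Finite σ]
    (S : σ → Finset R) (hS : ∀ i, (S i).Nonempty) (f : MvPolynomial σ R) :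
    ∃ r : MvPolynomial σ R, r.totalDegree ≤ f.totalDegree ∧ (∀ i, r.degreeOf i < #(S i)) ∧
      ∀ x : σ → R, (∀ i, x i ∈ S i) → eval x r = eval x f := by
  let : LinearOrder σ := WellOrderingRel.isWellOrder.linearOrder
  set b : σ → MvPolynomial σ R := fun i ↦ ∏ t ∈ S i, (X i - C t)
  have hb_monic (i : σ) : degLex.Monic (b i) :=
    Monic.prod fun t _ ↦ degLex.monic_X_sub_C i t
  have hb_degree (i : σ) : degLex.degree (b i) = Finsupp.single i #(S i) := by
    rw [degree_prod_of_regular fun t _ ↦ by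
      rw [(degLex.monic_X_sub_C i t).leadingCoeff_eq_one]; exact isRegular_one]
    simp [degree_X_sub_C]
  have hb_eval (x : σ → R) (hx : ∀ i, x i ∈ S i) (i : σ) : eval x (b i) = 0 := by
    simp only [b, map_prod, map_sub, eval_X, eval_C]
    exact prod_eq_zero (hx i) (sub_self _)
  obtain ⟨g, r, hf, hg, hr⟩ := degLex.div (fun i ↦ by
    rw [(hb_monic i).leadingCoeff_eq_one]; exact isUnit_one) f
  have hr_eq : r = f - ∑ i ∈ g.support, b i * g i := by
    rw [hf, Finsupp.linearCombination_apply, Finsupp.sum]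
    simp [mul_comm]
  refine ⟨r, ?_, fun i ↦ ?_, fun x hx ↦ ?_⟩
  · rw [hr_eq]
    refine (totalDegree_sub _ _).trans (max_le le_rfl ((totalDegree_finsetSum _ _).trans ?_))
    exact Finset.sup_le fun i _ ↦ degLex_totalDegree_monotone (hg i)
  · rw [degreeOf_lt_iff (card_pos.mpr (hS i))]
    intro c hc
    have := hr c hc i
    rwa [hb_degree, Finsupp.single_le_iff, not_le] at this
  · simp [hr_eq, hb_eval x hx]

variable {F : Type*} [Field F] [DecidableEq F]

theorem rpow_le_card_filter_eval_ne_zero_of_degreeOf_lt {s : ℕ} (hs : 2 ≤ s) :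
    ∀ {n : ℕ} (A : Fin n → Finset F), (∀ i, #(A i) = s) →
    ∀ {P : MvPolynomial (Fin n) F}, P ≠ 0 → (∀ i, P.degreeOf i < s) →
    (s : ℝ) ^ ((n : ℝ) - P.totalDegree / ((s : ℝ) - 1)) ≤ #{x ∈ piFinset A | eval x P ≠ 0}
  | 0, A, hA, P, hP, _ => by
    have hs1 : (1 : ℝ) ≤ s := by exact_mod_cast (by omega : 1 ≤ s)
    have hcard : #{x ∈ piFinset A | eval x P ≠ 0} = 1 := by
      rw [P.eq_C_of_isEmpty] at hP ⊢
      simp [C_ne_zero.mp hP]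
    rw [hcard, Nat.cast_one]
    refine Real.rpow_le_one_of_one_le_of_nonpos hs1 ?_
    rw [Nat.cast_zero, zero_sub, neg_nonpos]
    exact div_nonneg (Nat.cast_nonneg _) (by linarith)
  | n + 1, A, hA, P, hP, hdeg => by
    set Q := finSuccEquiv F n P
    set L := Q.leadingCoeff
    have hL : L ≠ 0 :=
      Polynomial.leadingCoeff_ne_zero.mpr ((finSuccEquiv F n).map_ne_zero_iff.mpr hP)
    have hk : Q.natDegree < s := natDegree_finSuccEquiv P ▸ hdeg 0
    have IH := rpow_le_card_filter_eval_ne_zero_of_degreeOf_lt hs (Fin.tail A) (fun i ↦ hA _) hL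
      fun i ↦ (degreeOf_coeff_finSuccEquiv P i _).trans_lt (hdeg _)
    have hfiber : ∀ y, eval y L ≠ 0 →
        s - Q.natDegree ≤ #{t ∈ A 0 | eval (Fin.cons t y) P ≠ 0} := by
      intro y hy
      have hdeg' : (Q.map (eval y)).natDegree = Q.natDegree :=
        Polynomial.natDegree_map_of_leadingCoeff_ne_zero _ hy
      have hne : Q.map (eval y) ≠ 0 := fun h ↦ hy <| by
        rw [← Polynomial.leadingCoeff_map_of_leadingCoeff_ne_zero _ hy, h,
          Polynomial.leadingCoeff_zero]
      simp_rw [eval_eq_eval_mv_eval']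
      simpa [hA 0, hdeg'] using Polynomial.card_sub_natDegree_le_card_filter_eval_ne_zero (A 0) hne
    have hcount : (s - Q.natDegree) * #{y ∈ piFinset (Fin.tail A) | eval y L ≠ 0} ≤
        #{x ∈ piFinset A | eval x P ≠ 0} := by
      rw [card_filter_piFinset_succ, mul_comm, ← smul_eq_mul, ← sum_const, sum_filter]
      exact sum_le_sum fun y _ ↦ by split_ifs with h; exacts [hfiber y h, Nat.zero_le _]
    have hs1 : (1 : ℝ) < s := by exact_mod_cast hs
    have hks : (Q.natDegree : ℝ) + 1 ≤ s := by exact_mod_cast hk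
    calc (s : ℝ) ^ (((n + 1 : ℕ) : ℝ) - P.totalDegree / ((s : ℝ) - 1))
        ≤ (s - Q.natDegree) * (s : ℝ) ^ ((n : ℝ) - L.totalDegree / ((s : ℝ) - 1)) :=
          Real.rpow_succ_sub_div_le_mul hs1 (by linarith)
            (totalDegree_coeff_finSuccEquiv_add_le P _ hL)
      _ ≤ (s - Q.natDegree) * #{y ∈ piFinset (Fin.tail A) | eval y L ≠ 0} := by
          gcongr; linarith
      _ ≤ #{x ∈ piFinset A | eval x P ≠ 0} := by
          rw [← Nat.cast_sub hk.le]; exact_mod_cast hcount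

theorem rpow_le_card_filter_eval_ne_zero {σ : Type*} [Fintype σ] [DecidableEq σ] {s : ℕ}
    (hs : 2 ≤ s) (A : σ → Finset F) (hA : ∀ i, #(A i) = s) {P : MvPolynomial σ F} {d : ℕ}
    (hd : P.totalDegree ≤ d) (hP : ∃ x ∈ piFinset A, eval x P ≠ 0) :
    (s : ℝ) ^ ((card σ : ℝ) - d / ((s : ℝ) - 1)) ≤ #{x ∈ piFinset A | eval x P ≠ 0} := by
  set e := equivFin σ
  obtain ⟨r, hr_deg, hr_degreeOf, hr_eval⟩ := exists_degreeOf_lt_eval_eq (A ∘ e.symm)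
    (fun i ↦ card_pos.mp (by rw [Function.comp_apply, hA]; omega)) (rename e P)
  have hr_eval' (y : Fin (card σ) → F) (hy : y ∈ piFinset (A ∘ e.symm)) :
      eval y r = eval (y ∘ e) P := by
    rw [hr_eval y (mem_piFinset.mp hy), eval_rename]
  have hr : r ≠ 0 := by
    obtain ⟨x, hx, hxP⟩ := hP
    have hy : x ∘ e.symm ∈ piFinset (A ∘ e.symm) :=
      mem_piFinset.mpr fun i ↦ mem_piFinset.mp hx _
    refine fun h ↦ hxP ?_
    simpa [h, Function.comp_assoc] using (hr_eval' _ hy).symm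
  have hcount :
      #{y ∈ piFinset (A ∘ e.symm) | eval y r ≠ 0} = #{x ∈ piFinset A | eval x P ≠ 0} := by
    rw [← card_filter_piFinset_equiv e]
    exact congrArg card (filter_congr fun y hy ↦ by rw [hr_eval' y hy])
  have hr_degreeOf' (i : Fin (card σ)) : r.degreeOf i < s := hA (e.symm i) ▸ hr_degreeOf i
  rw [← hcount]
  refine le_trans ?_
    (rpow_le_card_filter_eval_ne_zero_of_degreeOf_lt hs _ (fun i ↦ hA _) hr hr_degreeOf')
  have hs1 : (1 : ℝ) < s := by exact_mod_cast hs
  apply Real.rpow_le_rpow_of_exponent_le hs1.le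
  gcongr
  exact_mod_cast hr_deg.trans ((totalDegree_rename_le _ _).trans hd)

end MvPolynomial

namespace SimpleGraph

variable {F V : Type*} [Field F] [LinearOrder V] [Fintype V] (G : SimpleGraph V)
  [DecidableRel G.Adj]

noncomputable def labeledPolynomial (a b c : Sym2 V → F) : MvPolynomial V F :=
  ∏ e ∈ G.edgeFinset, (C (a e) * X e.inf + C (b e) * X e.sup + C (c e))

theorem eval_labeledPolynomial_ne_zero_iff (a b c : Sym2 V → F) (f : V → F) :
    eval f (G.labeledPolynomial a b c) ≠ 0 ↔
      ∀ e ∈ G.edgeFinset, a e * f e.inf + b e * f e.sup + c e ≠ 0 := by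
  simp [labeledPolynomial, prod_ne_zero_iff]

theorem totalDegree_labeledPolynomial_le (a b c : Sym2 V → F) :
    (G.labeledPolynomial a b c).totalDegree ≤ #G.edgeFinset := by
  have h_linear (e : Sym2 V) :
      (C (a e) * X e.inf + C (b e) * X e.sup + C (c e) : MvPolynomial V F).totalDegree ≤ 1 := by
    have h_monomial (r : F) (i : V) : (C r * X i : MvPolynomial V F).totalDegree ≤ 1 :=
      (totalDegree_mul _ _).trans (by simp [totalDegree_X])
    exact (totalDegree_add _ _).trans <| max_le ((totalDegree_add _ _).trans <|
      max_le (h_monomial _ _) (h_monomial _ _)) (by simp)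
  refine (totalDegree_finsetProd _ _).trans ?_
  simpa using sum_le_sum fun e (_ : e ∈ G.edgeFinset) ↦ h_linear e

end SimpleGraph

theorem card_field_colorings_of_exists_general {F : Type*} [Field F] [DecidableEq F]
    {V : Type*} [Fintype V] [LinearOrder V] [DecidableEq V] (s : ℕ) (hs : 2 ≤ s)
    (G : SimpleGraph V) [DecidableRel G.Adj]
    (a b c : Sym2 V → F)
    (A : V → Finset F) (hA : ∀ w, (A w).card = s)
    (n m : ℕ) (hn : n = Fintype.card V) (hm : m = G.edgeFinset.card)
    (hex : ∃ f : V → F, (∀ w, f w ∈ A w) ∧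
      ∀ e ∈ G.edgeFinset, a e * f e.inf + b e * f e.sup + c e ≠ 0) :
    (s : ℝ) ^ ((((n * (s - 1) : ℕ) : ℝ) - (m : ℝ)) / ((s : ℝ) - 1)) ≤
      (((Fintype.piFinset A).filter fun f =>
        ∀ e ∈ G.edgeFinset, a e * f e.inf + b e * f e.sup + c e ≠ 0).card : ℝ) := by
  obtain ⟨f, hfA, hf⟩ := hex
  have h_count := rpow_le_card_filter_eval_ne_zero hs A hA
    (hm ▸ G.totalDegree_labeledPolynomial_le a b c)
    ⟨f, mem_piFinset.mpr hfA, (G.eval_labeledPolynomial_ne_zero_iff a b c f).mpr hf⟩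
  have h_exponent : (((n * (s - 1) : ℕ) : ℝ) - m) / ((s : ℝ) - 1) =
      card V - m / ((s : ℝ) - 1) := by
    have hs1 : (s : ℝ) - 1 ≠ 0 := by
      rw [sub_ne_zero]; exact_mod_cast (by omega : s ≠ 1)
    rw [hn, Nat.cast_mul, Nat.cast_sub (by omega), Nat.cast_one, sub_div,
      mul_div_cancel_right₀ _ hs1]
  simpa only [h_exponent, SimpleGraph.eval_labeledPolynomial_ne_zero_iff] using h_count

/-- The weak Alon–Füredi theorem applied to the labeled decorated graph polynomial: if `G`
has `n` vertices and `m ≤ n·(s-1)` edges, all lists have size `s ≥ 2`, and at least one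
coloring avoiding all edge constraints exists, then the number of such colorings is at least
`s ^ ((n·(s-1) - m)/(s-1))`. -/
theorem card_field_colorings_of_exists {F : Type*} [Field F] [DecidableEq F]
    {V : Type*} [Fintype V] [LinearOrder V] [DecidableEq V] (s : ℕ) (hs : 2 ≤ s)
    (G : SimpleGraph V) [DecidableRel G.Adj]
    (a b c : Sym2 V → F)
    (A : V → Finset F) (hA : ∀ w, (A w).card = s)
    (n m : ℕ) (hn : n = Fintype.card V) (hm : m = G.edgeFinset.card)
    (hmn : m ≤ n * (s - 1))
    (hex : ∃ f : V → F, (∀ w, f w ∈ A w) ∧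
      ∀ e ∈ G.edgeFinset, a e * f e.inf + b e * f e.sup + c e ≠ 0) :
    (s : ℝ) ^ ((((n * (s - 1) : ℕ) : ℝ) - (m : ℝ)) / ((s : ℝ) - 1)) ≤
      (((Fintype.piFinset A).filter fun f =>
        ∀ e ∈ G.edgeFinset, a e * f e.inf + b e * f e.sup + c e ≠ 0).card : ℝ) :=
  card_field_colorings_of_exists_general s hs G a b c A hA n m hn hm hex
end
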